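/- Let k be a field of characteristic 2 and let A, B be disjoint subsets of {1,…,n}. Set P = P(A,B), and let G be a finite simple graph on {1,…,n} all of whose edges have both endpoints in B. Then P^{[2]} : J_G = P^{[2]} + (P(∅,B)^{[2]} : J_G). -/

import Mathlib

open MvPolynomial

noncomputable section

namespace BEI

/-- The polynomial ring `k[x_1,…,x_n,y_1,…,y_n]`: variables `Sum.inl i` are the `x_i`,
variables `Sum.inr i` are the `y_i`. -/
abbrev Ring' (k : Type*) [CommRing k] (n : ℕ) : Type _ := MvPolynomial (Fin n ⊕ Fin n) k

variable {k : Type*} [CommRing k] {n : ℕ}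

/-- The variable `x_i`. -/
def xv (i : Fin n) : Ring' k n := X (Sum.inl i)

/-- The variable `y_i`. -/
def yv (i : Fin n) : Ring' k n := X (Sum.inr i)

/-- The binomial `f_{i,j} = x_i y_j - x_j y_i`. -/
def fb (i j : Fin n) : Ring' k n := xv i * yv j - xv j * yv i

/-- The binomial edge ideal `J_G` of a graph `G` on `{1,…,n}`. -/
def beIdeal (G : SimpleGraph (Fin n)) : Ideal (Ring' k n) :=
  Ideal.span {g | ∃ i j, G.Adj i j ∧ g = fb i j}

/-- The Frobenius power `I^{[p]}`, the ideal generated by the `p`-th powers of all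
elements of `I`. -/
def frobPow {A : Type*} [CommSemiring A] (I : Ideal A) (p : ℕ) : Ideal A :=
  Ideal.span ((· ^ p) '' (I : Set A))

/-- The ideal `P(A,B)`, generated by `{x_i, y_i : i ∈ A}` together with all `f_{a,b}` for
distinct `a, b ∈ B`. -/
def PAB (A B : Finset (Fin n)) : Ideal (Ring' k n) :=
  Ideal.span
    ({g | ∃ i ∈ A, g = xv i ∨ g = yv i} ∪
      {g | ∃ a ∈ B, ∃ b ∈ B, a ≠ b ∧ g = fb a b})

/-
In characteristic `2` the Frobenius power is the extension of an ideal along the Frobenius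
endomorphism, so it commutes with sums and spans: `P(A,B)^{[2]} = M + Q` with
`M = (x_i^2, y_i^2 : i ∈ A)` and `Q = P(∅,B)^{[2]}`, and `Q` and `J_G` are generated by
polynomials in which no variable indexed by `A` occurs.
Truncating a polynomial to its monomials of degree `< 2` in every such variable annihilates `M`,
changes a polynomial only by an element of `M`, and commutes with multiplication by polynomials
free of these variables. So if `r J_G ⊆ M + Q`, the truncation `t` of `r` satisfies
`t J_G ⊆ Q`, and `r = (r - t) + t ∈ M + (Q : J_G)`.
-/

end BEI

namespace MvPolynomial

variable {σ R : Type*} [CommRing R]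

open scoped Classical in
/-- Keeps the monomials of a polynomial in which every variable of `s` has exponent `< m`. -/
def truncation (s : Set σ) (m : ℕ) : MvPolynomial σ R →ₗ[R] MvPolynomial σ R :=
  (AddMonoidAlgebra.coeffLinearEquiv _).symm.toLinearMap ∘ₗ Submodule.subtype _ ∘ₗ
    Finsupp.restrictDom _ _ {d | ∀ v ∈ s, d v < m} ∘ₗ
      (AddMonoidAlgebra.coeffLinearEquiv _).toLinearMap

open scoped Classical in
theorem coeff_truncation (s : Set σ) (m : ℕ) (p : MvPolynomial σ R) (d : σ →₀ ℕ) :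
    coeff d (truncation s m p) = if ∀ v ∈ s, d v < m then coeff d p else 0 := by
  simp [truncation, MvPolynomial, coeff, Finsupp.filter_apply]

variable {s : Set σ} {m : ℕ}

theorem truncation_mul_monomial {b : σ →₀ ℕ} (hb : ∀ v ∈ s, b v = 0)
    (p : MvPolynomial σ R) (c : R) :
    truncation s m (p * monomial b c) = truncation s m p * monomial b c := by
  classical
  ext d
  simp only [coeff_truncation, coeff_mul_monomial']
  by_cases hbd : b ≤ d
  · have hgood : (∀ v ∈ s, (d - b) v < m) ↔ ∀ v ∈ s, d v < m :=
      forall₂_congr fun v hv => by rw [Finsupp.tsub_apply, hb v hv, Nat.sub_zero]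
    simp only [hbd, if_true, hgood]
    split_ifs <;> simp
  · simp [hbd]

theorem truncation_mul_of_mem_supported {q : MvPolynomial σ R} (hq : q ∈ supported R sᶜ)
    (p : MvPolynomial σ R) : truncation s m (p * q) = truncation s m p * q := by
  rw [← q.support_sum_monomial_coeff]
  simp only [Finset.mul_sum, map_sum]
  refine Finset.sum_congr rfl fun b hb => truncation_mul_monomial (fun v hv => ?_) p _
  by_contra hbv
  have hvars : v ∈ q.vars :=
    (mem_vars_iff_mem_support v).2 ⟨b, hb, Finsupp.mem_support_iff.2 hbv⟩
  exact mem_supported.1 hq hvars hv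

theorem truncation_mul_X_pow {v : σ} (hv : v ∈ s) (p : MvPolynomial σ R) :
    truncation s m (p * X v ^ m) = 0 := by
  classical
  ext d
  rw [coeff_truncation, X_pow_eq_monomial, coeff_mul_monomial', coeff_zero]
  split_ifs with hd hle
  · have := hd v hv
    simp only [Finsupp.single_le_iff] at hle
    omega
  all_goals rfl

theorem sub_truncation_mem_span_X_pow (p : MvPolynomial σ R) :
    p - truncation s m p ∈ Ideal.span ((fun v => X v ^ m) '' s) := by
  classical
  rw [← (p - truncation s m p).support_sum_monomial_coeff]
  refine Ideal.sum_mem _ fun d hd => ?_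
  obtain ⟨v, hv, hmd⟩ : ∃ v ∈ s, m ≤ d v := by
    by_contra! h
    rw [mem_support_iff, coeff_sub, coeff_truncation, if_pos h, sub_self] at hd
    exact hd rfl
  have hsplit : monomial d (coeff d (p - truncation s m p))
      = X v ^ m * monomial (d - Finsupp.single v m) (coeff d (p - truncation s m p)) := by
    rw [X_pow_eq_monomial, monomial_mul, one_mul,
      add_tsub_cancel_of_le (Finsupp.single_le_iff.2 hmd)]
  rw [hsplit]
  exact Ideal.mul_mem_right _ _ (Ideal.subset_span ⟨v, hv, rfl⟩)

theorem truncation_mem_span_of_mem_sup {S : Set (MvPolynomial σ R)} (hS : S ⊆ supported R sᶜ)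
    {p : MvPolynomial σ R} (hp : p ∈ Ideal.span ((fun v => X v ^ m) '' s) ⊔ Ideal.span S) :
    truncation s m p ∈ Ideal.span S := by
  rw [← Ideal.span_union] at hp
  -- `truncation` is only linear over polynomials free of `s`: induct over all multiples of `p`.
  suffices ∀ a, truncation s m (a * p) ∈ Ideal.span S by simpa using this 1
  induction hp using Submodule.span_induction with
  | mem g hg =>
    intro a
    rcases hg with ⟨v, hv, rfl⟩ | hg
    · rw [truncation_mul_X_pow hv]
      exact zero_mem _
    · rw [truncation_mul_of_mem_supported (hS hg)]
      exact Ideal.mul_mem_left _ _ (Ideal.subset_span hg)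
  | zero => simp
  | add f g _ _ hf hg =>
    intro a
    rw [mul_add, map_add]
    exact add_mem (hf a) (hg a)
  | smul b f _ hf =>
    intro a
    rw [smul_eq_mul, ← mul_assoc]
    exact hf _

theorem colon_sup_span_X_pow {S T : Set (MvPolynomial σ R)}
    (hS : S ⊆ supported R sᶜ) (hT : T ⊆ supported R sᶜ) :
    (Ideal.span ((fun v => X v ^ m) '' s) ⊔ Ideal.span S).colon T
      = Ideal.span ((fun v => X v ^ m) '' s) ⊔ Ideal.span S ⊔ (Ideal.span S).colon T := by
  refine le_antisymm (fun r hr => ?_)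
    (sup_le Ideal.le_colon (Submodule.colon_mono le_sup_right subset_rfl))
  have htr : truncation s m r ∈ (Ideal.span S).colon T := Submodule.mem_colon.2 fun t ht => by
    rw [smul_eq_mul, ← truncation_mul_of_mem_supported (hT ht)]
    exact truncation_mem_span_of_mem_sup hS (Submodule.mem_colon.1 hr t ht)
  rw [← sub_add_cancel r (truncation s m r)]
  exact add_mem (Ideal.mem_sup_left (Ideal.mem_sup_left (sub_truncation_mem_span_X_pow r)))
    (Ideal.mem_sup_right htr)

end MvPolynomial

namespace BEI

section Frobenius

variable {R : Type*} [CommSemiring R] (p : ℕ) [ExpChar R p]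

theorem frobPow_eq_map (I : Ideal R) : frobPow I p = I.map (frobenius R p) :=
  rfl

theorem frobPow_span (S : Set R) : frobPow (Ideal.span S) p = Ideal.span ((· ^ p) '' S) := by
  rw [frobPow_eq_map, Ideal.map_span]
  rfl

theorem frobPow_sup (I J : Ideal R) : frobPow (I ⊔ J) p = frobPow I p ⊔ frobPow J p := by
  simp only [frobPow_eq_map, Ideal.map_sup]

end Frobenius

variable {k : Type*} [CommRing k] {n : ℕ}

def varsOn (A : Finset (Fin n)) : Set (Fin n ⊕ Fin n) := Sum.inl '' A ∪ Sum.inr '' A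

theorem fb_mem_supported {A : Finset (Fin n)} {a b : Fin n} (ha : a ∉ A) (hb : b ∉ A) :
    (fb a b : Ring' k n) ∈ supported k (varsOn A)ᶜ := by
  refine sub_mem (mul_mem ?_ ?_) (mul_mem ?_ ?_) <;>
    exact Algebra.subset_adjoin ⟨_, by simp [varsOn, ha, hb], rfl⟩

theorem PAB_empty (B : Finset (Fin n)) :
    PAB (k := k) ∅ B = Ideal.span {g | ∃ a ∈ B, ∃ b ∈ B, a ≠ b ∧ g = fb a b} := by
  simp [PAB]

theorem PAB_eq_sup (A B : Finset (Fin n)) :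
    PAB (k := k) A B = Ideal.span (X '' varsOn A) ⊔ PAB ∅ B := by
  rw [PAB_empty, PAB, Ideal.span_union]
  congr 2
  ext g
  simp [varsOn, xv, yv, eq_comm, and_or_left, exists_or]

/-- in characteristic `2`, with `P = P(A,B)` for disjoint `A, B` and a
graph `G` all of whose edges have both endpoints in `B`, one has
`P^{[2]} : J_G = P^{[2]} + (P(∅,B)^{[2]} : J_G)`. -/
theorem reduction_of_colon_computation (k : Type*) [Field k] [CharP k 2] (n : ℕ)
    (A B : Finset (Fin n)) (hdisj : Disjoint A B)
    (G : SimpleGraph (Fin n)) (hGB : ∀ i j : Fin n, G.Adj i j → i ∈ B ∧ j ∈ B) :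
    Submodule.colon (frobPow (PAB (k := k) A B) 2) (beIdeal (k := k) G)
      = frobPow (PAB (k := k) A B) 2 ⊔
          Submodule.colon (frobPow (PAB (k := k) (∅ : Finset (Fin n)) B) 2)
            (beIdeal (k := k) G) := by
  have hBA : ∀ {b}, b ∈ B → b ∉ A := fun hb => Finset.disjoint_right.1 hdisj hb
  rw [PAB_eq_sup, frobPow_sup, frobPow_span, Set.image_image, PAB_empty, frobPow_span, beIdeal,
    Ideal.colon_span, Ideal.colon_span, colon_sup_span_X_pow]
  · rintro _ ⟨_, ⟨a, ha, b, hb, -, rfl⟩, rfl⟩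
    exact pow_mem (fb_mem_supported (hBA ha) (hBA hb)) 2
  · rintro _ ⟨i, j, hij, rfl⟩
    exact fb_mem_supported (hBA (hGB i j hij).1) (hBA (hGB i j hij).2)

end BEI
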